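/- Let M1 = ⟨I1,T1⟩ be a three-valued model of a disjunctive definite program P, and let I2, T2 be sets of atoms with I2 ∩ T2 = ∅ and T1 ∪ I1 = T2 ∪ I2. Then M2 = ⟨I2,T2⟩ is also a model of P. (Any repartitioning of the non-false atoms of a model into true and inadmissible atoms yields a model.) -/
import Mathlib

open Classical

/-- The three truth values: true, false, inadmissible. -/
inductive TV : Type where
  | t : TV
  | f : TV
  | i : TV
deriving DecidableEq

/-- Kleene strong three-valued conjunction. -/
def TV.and : TV → TV → TV
  | .t, .t => .t
  | .f, _ => .f
  | _, .f => .f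
  | _, _ => .i

/-- Kleene strong three-valued disjunction. -/
def TV.or : TV → TV → TV
  | .f, .f => .f
  | .t, _ => .t
  | _, .t => .t
  | _, _ => .i

/-- Ground body formulas over a set `α` of ground atoms:
built from atoms using binary conjunction and disjunction. -/
inductive Body (α : Type*) : Type _ where
  | atom : α → Body α
  | conj : Body α → Body α → Body α
  | disj : Body α → Body α → Body α

variable {α : Type*}

/-- Value of an atom in the interpretation `⟨I,T⟩` (inadmissible atoms `I`,
true atoms `T`, all other atoms false). -/
noncomputable def atomVal (I T : Set α) (a : α) : TV :=
  if a ∈ T then TV.t else if a ∈ I then TV.i else TV.f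

/-- Kleene strong three-valued evaluation of a body formula in `⟨I,T⟩`. -/
noncomputable def beval (I T : Set α) : Body α → TV
  | .atom a => atomVal I T a
  | .conj b c => TV.and (beval I T b) (beval I T c)
  | .disj b c => TV.or (beval I T b) (beval I T c)

/-- A (ground) disjunctive definite program: a set of ground clause instances
`H ← B`, represented as pairs `(H, B)`. -/
abbrev Program (α : Type*) := Set (α × Body α)

/-- `⟨I,T⟩` is a model of `P`: no clause instance `H ← B` in `P` has `H`
evaluating to F while `B` evaluates to T or I (i.e. head F implies body F). -/
def IsModel (P : Program α) (I T : Set α) : Prop :=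
  ∀ c ∈ P, atomVal I T c.1 = TV.f → beval I T c.2 = TV.f

lemma atomVal_f_iff (I T : Set α) (a : α) :
    atomVal I T a = TV.f ↔ a ∉ T ∪ I := by
  unfold atomVal
  by_cases hT : a ∈ T <;> by_cases hI : a ∈ I <;> simp [hT, hI]

lemma TV.and_f_iff (x y : TV) : TV.and x y = TV.f ↔ x = TV.f ∨ y = TV.f := by
  cases x <;> cases y <;> simp [TV.and]

lemma TV.or_f_iff (x y : TV) : TV.or x y = TV.f ↔ x = TV.f ∧ y = TV.f := by
  cases x <;> cases y <;> simp [TV.or]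

lemma beval_f_iff (I₁ T₁ I₂ T₂ : Set α) (h : T₁ ∪ I₁ = T₂ ∪ I₂) (b : Body α) :
    beval I₁ T₁ b = TV.f ↔ beval I₂ T₂ b = TV.f := by
  induction b with
  | atom a => rw [beval, beval, atomVal_f_iff, atomVal_f_iff, h]
  | conj b c ihb ihc => rw [beval, beval, TV.and_f_iff, TV.and_f_iff, ihb, ihc]
  | disj b c ihb ihc => rw [beval, beval, TV.or_f_iff, TV.or_f_iff, ihb, ihc]

/-- Any repartitioning of the non-false atoms of a model into
true and inadmissible atoms yields a model: if `⟨I₁,T₁⟩` is a model of `P`,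
`I₂ ∩ T₂ = ∅` and `T₁ ∪ I₁ = T₂ ∪ I₂`, then `⟨I₂,T₂⟩` is a model of `P`. -/
theorem model_repartition {α : Type*} (P : Program α) (I₁ T₁ I₂ T₂ : Set α)
    (h₁disj : Disjoint I₁ T₁)
    (h₁ : IsModel P I₁ T₁)
    (h₂disj : I₂ ∩ T₂ = ∅)
    (hunion : T₁ ∪ I₁ = T₂ ∪ I₂) :
    IsModel P I₂ T₂ := by
  intro c hc hhead
  rw [← beval_f_iff I₁ T₁ I₂ T₂ hunion]
  apply h₁ c hc
  rw [atomVal_f_iff] at hhead ⊢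
  rw [hunion]; exact hhead
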